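/- arXiv:1711.07211 — 2 statements merged into one kernel-verified Lean document; each statement's English description precedes it below -/
import Mathlib

section
/- Small pairwise intersection of concentrated subsets: Let n be a positive integer, let α ∈ (0, 1/2), let u > 0, and let x, y ∈ ℝⁿ with ‖x − y‖₂ ≥ 2u. Suppose S_x and S_y are finite subsets of ℝⁿ such that for every unit vector v ∈ ℝⁿ, the number of points z ∈ S_x with |⟨v, z − x⟩| ≥ u is at most (α/10)·|S_x|, and the number of points z ∈ S_y with |⟨v, z − y⟩| ≥ u is at most (α/10)·|S_y|. Then |S_x ∩ S_y| ≤ (α/10)·(|S_x| + |S_y|). -/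
/-!
Along the unit direction `v` of `x - y`, the projections of `z - x` and `z - y` differ by
`‖x - y‖ ≥ 2u`, so every point `z` is `u`-far from `x` or from `y` in direction `v`. Hence
`S_x ∩ S_y` is covered by the two exceptional sets of the single direction `v`.
-/

open Finset

section

variable {E : Type*} [NormedAddCommGroup E] [InnerProductSpace ℝ E]

theorem exists_norm_eq_one_inner_eq_norm {w : E} (hw : w ≠ 0) :
    ∃ v : E, ‖v‖ = 1 ∧ inner ℝ v w = ‖w‖ := by
  refine ⟨‖w‖⁻¹ • w, norm_smul_inv_norm hw, ?_⟩
  rw [real_inner_smul_left, real_inner_self_eq_norm_sq]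
  field_simp [norm_ne_zero_iff.mpr hw]

theorem abs_inner_sub_le_abs_inner_sub_add (v x y z : E) :
    |inner ℝ v (x - y)| ≤ |inner ℝ v (z - x)| + |inner ℝ v (z - y)| := by
  have hsplit : inner ℝ v (x - y) = inner ℝ v (z - y) - inner ℝ v (z - x) := by
    rw [← inner_sub_right, sub_sub_sub_cancel_left]
  rw [hsplit, add_comm]
  exact abs_sub _ _

theorem exists_unit_separating {x y : E} {u : ℝ} (hu : 0 < u) (hxy : 2 * u ≤ ‖x - y‖) :
    ∃ v : E, ‖v‖ = 1 ∧ ∀ z : E, u ≤ |inner ℝ v (z - x)| ∨ u ≤ |inner ℝ v (z - y)| := by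
  have hne : x - y ≠ 0 := norm_pos_iff.mp (by linarith)
  obtain ⟨v, hv, hvxy⟩ := exists_norm_eq_one_inner_eq_norm hne
  refine ⟨v, hv, fun z => ?_⟩
  have := abs_inner_sub_le_abs_inner_sub_add v x y z
  rw [hvxy, abs_norm] at this
  by_contra! h
  linarith [h.1, h.2]

end

theorem card_inter_le_card_filter_add_card_filter {ι : Type*} [DecidableEq ι]
    (s t : Finset ι) (p q : ι → Prop) [DecidablePred p] [DecidablePred q]
    (h : ∀ z ∈ s ∩ t, p z ∨ q z) : #(s ∩ t) ≤ #(s.filter p) + #(t.filter q) := by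
  refine (card_le_card fun z hz => ?_).trans (card_union_le _ _)
  have ⟨hs, ht⟩ := mem_inter.mp hz
  rw [mem_union, mem_filter, mem_filter]
  rcases h z hz with hp | hq
  · exact Or.inl ⟨hs, hp⟩
  · exact Or.inr ⟨ht, hq⟩

open Classical in
theorem stmt_2_general (n : ℕ) (α u : ℝ) (hu : 0 < u)
    (x y : EuclideanSpace ℝ (Fin n)) (hxy : 2 * u ≤ ‖x - y‖)
    (Sx Sy : Finset (EuclideanSpace ℝ (Fin n)))
    (hx : ∀ v : EuclideanSpace ℝ (Fin n), ‖v‖ = 1 →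
      ((Sx.filter fun z => u ≤ |(inner ℝ v (z - x) : ℝ)|).card : ℝ) ≤ (α / 10) * (Sx.card : ℝ))
    (hy : ∀ v : EuclideanSpace ℝ (Fin n), ‖v‖ = 1 →
      ((Sy.filter fun z => u ≤ |(inner ℝ v (z - y) : ℝ)|).card : ℝ) ≤ (α / 10) * (Sy.card : ℝ)) :
    ((Sx ∩ Sy).card : ℝ) ≤ (α / 10) * ((Sx.card : ℝ) + (Sy.card : ℝ)) := by
  obtain ⟨v, hv, hsep⟩ := exists_unit_separating hu hxy
  have hcard : ((Sx ∩ Sy).card : ℝ) ≤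
      ((Sx.filter fun z => u ≤ |(inner ℝ v (z - x) : ℝ)|).card : ℝ) +
        ((Sy.filter fun z => u ≤ |(inner ℝ v (z - y) : ℝ)|).card : ℝ) := by
    exact_mod_cast card_inter_le_card_filter_add_card_filter Sx Sy _ _ fun z _ => hsep z
  linarith [hx v hv, hy v hv]

open Classical in
/-- Small pairwise intersection of concentrated subsets. -/
theorem stmt_2 (n : ℕ) (hn : 0 < n) (α u : ℝ) (hα0 : 0 < α) (hα : α < 1 / 2) (hu : 0 < u)
    (x y : EuclideanSpace ℝ (Fin n)) (hxy : 2 * u ≤ ‖x - y‖)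
    (Sx Sy : Finset (EuclideanSpace ℝ (Fin n)))
    (hx : ∀ v : EuclideanSpace ℝ (Fin n), ‖v‖ = 1 →
      ((Sx.filter fun z => u ≤ |(inner ℝ v (z - x) : ℝ)|).card : ℝ) ≤ (α / 10) * (Sx.card : ℝ))
    (hy : ∀ v : EuclideanSpace ℝ (Fin n), ‖v‖ = 1 →
      ((Sy.filter fun z => u ≤ |(inner ℝ v (z - y) : ℝ)|).card : ℝ) ≤ (α / 10) * (Sy.card : ℝ)) :
    ((Sx ∩ Sy).card : ℝ) ≤ (α / 10) * ((Sx.card : ℝ) + (Sy.card : ℝ)) :=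
  stmt_2_general n α u hu x y hxy Sx Sy hx hy
end

section
/- Variance bound for a Hermite polynomial of a shifted Gaussian (corrected form of the paper's lemma): For every integer d ≥ 1, every θ ∈ ℝ, and X distributed as the one-dimensional Gaussian N(θ, 1), the variance Var[He_d(X)] = Σ_{k=1}^{d} C(d, k)² · θ^{2(d−k)} · k! satisfies Var[He_d(X)] ≤ 3 d² · max(d, |θ|)^{2(d−1)}. -/
/-!
Under `N(0,1)`, Stein's identity `E[X q(X)] = E[q'(X)]` and the recursion `He_{n+1} = X He_n - He_n'`
give `E[He_n q] = E[q^{(n)}]` for every polynomial `q`; since `He_j^{(k)} = j(j-1)⋯(j-k+1) He_{j-k}`,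
the Hermite polynomials are orthogonal with `E[He_k²] = k!`. As `(He_n)` is an Appell sequence,
`He_d(x + θ) = ∑ₖ C(d,k) θ^{d-k} He_k(x)`, so under `N(θ,1)` the mean of `He_d` is `θ^d` and its second
moment is `∑ₖ C(d,k)² θ^{2(d-k)} k!`, whose `k = 0` term is the squared mean. For the bound,
`(C(d,k) k!)² ≤ d^{2k}` makes the `k`-th term at most `d² max(d,|θ|)^{2(d-1)} / k!`, and
`∑ 1/k! ≤ e < 3`.
-/

open MeasureTheory Polynomial Real
open scoped NNReal

namespace Polynomial

lemma derivative_hermite_succ (n : ℕ) :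
    derivative (hermite (n + 1)) = (n + 1 : ℤ[X]) * hermite n := by
  induction n with
  | zero => simp [hermite_zero]
  | succ n ih =>
    rw [hermite_succ (n + 1), derivative_sub, derivative_mul, ih, derivative_X,
      derivative_mul, derivative_add, derivative_natCast, derivative_one, hermite_succ n]
    push_cast
    ring

lemma derivative_hermite (n : ℕ) : derivative (hermite n) = n * hermite (n - 1) := by
  cases n with
  | zero => simp [hermite_zero]
  | succ n => simpa using derivative_hermite_succ n

lemma iterate_derivative_hermite (n k : ℕ) :
    derivative^[k] (hermite n) = n.descFactorial k * hermite (n - k) := by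
  induction k with
  | zero => simp
  | succ k ih =>
    rw [Function.iterate_succ_apply', ih, derivative_natCast_mul, derivative_hermite,
      Nat.descFactorial_succ, Nat.sub_sub]
    push_cast
    ring

lemma hasseDeriv_hermite (n k : ℕ) : hasseDeriv k (hermite n) = n.choose k * hermite (n - k) := by
  apply smul_right_injective ℤ[X] (Nat.factorial_ne_zero k)
  change k.factorial • hasseDeriv k (hermite n) = k.factorial • _
  rw [← LinearMap.smul_apply, factorial_smul_hasseDeriv, iterate_derivative_hermite,
    Nat.descFactorial_eq_factorial_mul_choose, nsmul_eq_mul]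
  push_cast
  ring

lemma hasseDeriv_map {R S : Type*} [Semiring R] [Semiring S] (f : R →+* S) (k : ℕ) (p : R[X]) :
    hasseDeriv k (p.map f) = (hasseDeriv k p).map f := by
  ext n
  simp [hasseDeriv_coeff]

lemma aeval_add_hermite {A : Type*} [CommRing A] (n : ℕ) (x y : A) :
    aeval (x + y) (hermite n) =
      ∑ k ∈ Finset.range (n + 1), (n.choose k : A) * y ^ (n - k) * aeval x (hermite k) := by
  set P := (hermite n).map (algebraMap ℤ A)
  have hdeg : (taylor x P).natDegree < n + 1 := by
    rw [natDegree_taylor]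
    exact (natDegree_map_le.trans natDegree_hermite.le).trans_lt n.lt_succ_self
  rw [← eval_map_algebraMap, add_comm, ← taylor_eval, eval_eq_sum_range' hdeg,
    ← Finset.sum_range_reflect]
  refine Finset.sum_congr rfl fun k hk ↦ ?_
  have hkn : k ≤ n := Nat.lt_succ_iff.mp (Finset.mem_range.mp hk)
  rw [Nat.add_sub_cancel, taylor_coeff, hasseDeriv_map, hasseDeriv_hermite, Nat.sub_sub_self hkn,
    Nat.choose_symm hkn, Polynomial.map_mul, Polynomial.map_natCast, eval_mul, eval_natCast,
    eval_map_algebraMap]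
  ring

end Polynomial

namespace ProbabilityTheory

lemma hasDerivAt_gaussianPDFReal (μ : ℝ) (v : ℝ≥0) (x : ℝ) :
    HasDerivAt (gaussianPDFReal μ v) (-((x - μ) / v) * gaussianPDFReal μ v x) x := by
  have hexp : HasDerivAt (fun y ↦ -(y - μ) ^ 2 / (2 * v)) (-((x - μ) / v)) x :=
    ((((hasDerivAt_id' x).sub_const μ).pow 2).neg.div_const (2 * (v : ℝ))).congr_deriv (by ring)
  rw [gaussianPDFReal_def]
  exact (hexp.exp.const_mul _).congr_deriv (by ring)

variable {R : Type*} [CommSemiring R] [Algebra R ℝ] {μ : ℝ} {v : ℝ≥0}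

lemma integrable_aeval_gaussianReal (p : R[X]) :
    Integrable (fun x ↦ aeval x p) (gaussianReal μ v) := by
  induction p using Polynomial.induction_on' with
  | add p q hp hq => simpa only [map_add] using hp.fun_add hq
  | monomial n a =>
    have h := integrable_pow_of_mem_interior_integrableExpSet
      (X := id) (μ := gaussianReal μ v) (by simp [integrableExpSet_id_gaussianReal]) n
    simpa [aeval_monomial, Algebra.smul_def] using h.const_mul (algebraMap R ℝ a)

lemma integrable_gaussianPDFReal_mul_iff (hv : v ≠ 0) {f : ℝ → ℝ} :
    Integrable (fun x ↦ gaussianPDFReal μ v x * f x) ↔ Integrable f (gaussianReal μ v) := by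
  rw [gaussianReal_of_var_ne_zero μ hv, integrable_withDensity_iff_integrable_smul'
    (measurable_gaussianPDF μ v) (Filter.Eventually.of_forall fun _ ↦ gaussianPDF_lt_top)]
  simp [toReal_gaussianPDF]

lemma integrable_sub_mul_aeval_gaussianReal (p : R[X]) :
    Integrable (fun x ↦ (x - μ) * aeval x p) (gaussianReal μ v) := by
  have h := (integrable_aeval_gaussianReal (μ := μ) (v := v) (X * p)).sub'
    ((integrable_aeval_gaussianReal p).const_mul μ)
  simpa only [map_mul, aeval_X, sub_mul] using h

lemma integral_sub_mul_aeval_gaussianReal (p : R[X]) :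
    ∫ x, (x - μ) * aeval x p ∂gaussianReal μ v =
      v * ∫ x, aeval x (derivative p) ∂gaussianReal μ v := by
  rcases eq_or_ne v 0 with rfl | hv
  · simp [gaussianReal_zero_var]
  have hint {f : ℝ → ℝ} (hf : Integrable f (gaussianReal μ v)) :=
    (integrable_gaussianPDFReal_mul_iff hv).2 hf
  have hderiv (x : ℝ) : HasDerivAt (fun y ↦ gaussianPDFReal μ v y * aeval y p)
      (gaussianPDFReal μ v x * aeval x (derivative p) -
        (v : ℝ)⁻¹ * (gaussianPDFReal μ v x * ((x - μ) * aeval x p))) x :=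
    ((hasDerivAt_gaussianPDFReal μ v x).mul (p.hasDerivAt_aeval x)).congr_deriv (by ring)
  have key := integral_eq_zero_of_hasDerivAt_of_integrable hderiv
    ((hint (integrable_aeval_gaussianReal _)).sub'
      ((hint (integrable_sub_mul_aeval_gaussianReal p)).const_mul _))
    (hint (integrable_aeval_gaussianReal p))
  rw [integral_sub (hint (integrable_aeval_gaussianReal _))
      ((hint (integrable_sub_mul_aeval_gaussianReal p)).const_mul _), integral_const_mul,
    sub_eq_zero] at key
  simp only [integral_gaussianReal_eq_integral_smul hv, smul_eq_mul, key]
  field_simp [show (v : ℝ) ≠ 0 by exact_mod_cast hv]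

lemma integral_gaussianReal_eq_integral_add (f : ℝ → ℝ) :
    ∫ x, f x ∂gaussianReal μ v = ∫ x, f (x + μ) ∂gaussianReal 0 v := by
  have h := gaussianReal_map_add_const (μ := 0) (v := v) μ
  rw [zero_add] at h
  rw [← h]
  exact integral_map_equiv (MeasurableEquiv.addRight μ) f

lemma memLp_aeval_gaussianReal (p : R[X]) :
    MemLp (fun x ↦ aeval x p) 2 (gaussianReal μ v) := by
  refine (memLp_two_iff_integrable_sq (p.continuous_aeval.aestronglyMeasurable)).2 ?_
  convert integrable_aeval_gaussianReal (μ := μ) (v := v) (p ^ 2) using 2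
  rw [map_pow]

lemma integral_aeval_hermite_mul (n : ℕ) (q : ℤ[X]) :
    ∫ x, aeval x (hermite n) * aeval x q ∂gaussianReal 0 1 =
      ∫ x, aeval x (derivative^[n] q) ∂gaussianReal 0 1 := by
  induction n generalizing q with
  | zero => simp [hermite_zero]
  | succ n ih =>
    have hpoly : hermite (n + 1) * q =
        X * (hermite n * q) - derivative (hermite n * q) + hermite n * derivative q := by
      rw [hermite_succ, derivative_mul]
      ring
    have hstein := integral_sub_mul_aeval_gaussianReal (μ := 0) (v := 1) (hermite n * q)
    have hXp := integrable_sub_mul_aeval_gaussianReal (μ := 0) (v := 1) (hermite n * q)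
    simp only [sub_zero, NNReal.coe_one, one_mul] at hstein hXp
    have hint (p : ℤ[X]) := integrable_aeval_gaussianReal (μ := 0) (v := 1) p
    calc ∫ x, aeval x (hermite (n + 1)) * aeval x q ∂gaussianReal 0 1
        = ∫ x, (x * aeval x (hermite n * q) - aeval x (derivative (hermite n * q))) +
            aeval x (hermite n * derivative q) ∂gaussianReal 0 1 := by
          congr 1 with x
          rw [← map_mul, hpoly, map_add, map_sub, map_mul _ X, aeval_X]
      _ = ∫ x, aeval x (hermite n) * aeval x (derivative q) ∂gaussianReal 0 1 := by
          rw [integral_add (hXp.sub' (hint _)) (hint _), integral_sub hXp (hint _), hstein,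
            sub_self, zero_add]
          simp only [map_mul]
      _ = _ := by rw [ih, Function.iterate_succ_apply]

lemma integral_aeval_hermite (n : ℕ) :
    ∫ x, aeval x (hermite n) ∂gaussianReal 0 1 = if n = 0 then 1 else 0 := by
  have h := integral_aeval_hermite_mul n (hermite 0)
  rw [iterate_derivative_hermite] at h
  cases n <;> simp_all [hermite_zero]

lemma integral_aeval_hermite_mul_hermite (j k : ℕ) :
    ∫ x, aeval x (hermite j) * aeval x (hermite k) ∂gaussianReal 0 1 =
      if j = k then (k.factorial : ℝ) else 0 := by
  rw [integral_aeval_hermite_mul, iterate_derivative_hermite]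
  simp only [map_mul, map_natCast]
  rw [integral_const_mul, integral_aeval_hermite]
  rcases lt_trichotomy j k with h | rfl | h
  · simp [h.ne, Nat.sub_ne_zero_of_lt h]
  · simp [Nat.descFactorial_self]
  · simp [h.ne', Nat.descFactorial_eq_zero_iff_lt.2 h]

lemma integral_sum_mul_aeval_hermite (c : ℕ → ℝ) (n : ℕ) :
    ∫ x, ∑ k ∈ Finset.range (n + 1), c k * aeval x (hermite k) ∂gaussianReal 0 1 = c 0 := by
  rw [integral_finsetSum _ fun k _ ↦ (integrable_aeval_gaussianReal _).const_mul _]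
  simp [integral_const_mul, integral_aeval_hermite]

lemma integral_sum_mul_aeval_hermite_sq (c : ℕ → ℝ) (s : Finset ℕ) :
    ∫ x, (∑ k ∈ s, c k * aeval x (hermite k)) ^ 2 ∂gaussianReal 0 1 =
      ∑ k ∈ s, c k ^ 2 * k.factorial := by
  have hexpand (x : ℝ) : (∑ k ∈ s, c k * aeval x (hermite k)) ^ 2 =
      ∑ j ∈ s, ∑ k ∈ s, c j * c k * (aeval x (hermite j) * aeval x (hermite k)) := by
    rw [sq, Finset.sum_mul_sum]
    simp only [mul_mul_mul_comm]
  have hint (j k : ℕ) : Integrable (fun x ↦ c j * c k * (aeval x (hermite j) * aeval x (hermite k)))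
      (gaussianReal 0 1) := by
    simpa only [map_mul] using
      (integrable_aeval_gaussianReal (μ := 0) (v := 1) (hermite j * hermite k)).const_mul (c j * c k)
  simp_rw [hexpand]
  rw [integral_finsetSum _ fun j _ ↦ integrable_finsetSum _ fun k _ ↦ hint j k]
  simp_rw [integral_finsetSum _ fun k _ ↦ hint _ k, integral_const_mul,
    integral_aeval_hermite_mul_hermite]
  simp [sq]

lemma integral_aeval_hermite_gaussianReal (θ : ℝ) (n : ℕ) :
    ∫ x, aeval x (hermite n) ∂gaussianReal θ 1 = θ ^ n := by
  rw [integral_gaussianReal_eq_integral_add]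
  simp_rw [aeval_add_hermite]
  exact (integral_sum_mul_aeval_hermite (fun k ↦ (n.choose k : ℝ) * θ ^ (n - k)) n).trans (by simp)

lemma integral_aeval_hermite_sq_gaussianReal (θ : ℝ) (n : ℕ) :
    ∫ x, aeval x (hermite n) ^ 2 ∂gaussianReal θ 1 =
      ∑ k ∈ Finset.range (n + 1), ((n.choose k : ℝ) * θ ^ (n - k)) ^ 2 * k.factorial := by
  rw [integral_gaussianReal_eq_integral_add]
  simp_rw [aeval_add_hermite]
  exact integral_sum_mul_aeval_hermite_sq (fun k ↦ (n.choose k : ℝ) * θ ^ (n - k)) _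

lemma variance_aeval_hermite_gaussianReal (θ : ℝ) (d : ℕ) :
    variance (fun x ↦ aeval x (hermite d)) (gaussianReal θ 1) =
      ∑ k ∈ Finset.Icc 1 d, (d.choose k : ℝ) ^ 2 * θ ^ (2 * (d - k)) * k.factorial := by
  rw [variance_eq_sub (memLp_aeval_gaussianReal _)]
  simp only [Pi.pow_apply]
  rw [integral_aeval_hermite_sq_gaussianReal, integral_aeval_hermite_gaussianReal,
    Finset.range_eq_Ico, Finset.Ico_add_one_right_eq_Icc,
    ← Finset.sum_Ioc_add_eq_sum_Icc d.zero_le, ← Finset.Icc_add_one_left_eq_Ioc, zero_add]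
  simp only [Nat.choose_zero_right, Nat.sub_zero, Nat.factorial_zero, Nat.cast_one, one_mul,
    mul_one, add_sub_cancel_right]
  exact Finset.sum_congr rfl fun k _ ↦ by ring

end ProbabilityTheory

section

open Finset

lemma Nat.choose_mul_factorial_sq_le (d k : ℕ) : (d.choose k * k.factorial) ^ 2 ≤ (d ^ 2) ^ k := by
  rw [mul_comm, ← Nat.descFactorial_eq_factorial_mul_choose, ← pow_mul, mul_comm, pow_mul]
  exact Nat.pow_le_pow_left (Nat.descFactorial_le_pow d k) 2

lemma choose_sq_mul_pow_mul_factorial_le {d k : ℕ} (hk : 1 ≤ k) (hkd : k ≤ d) (θ : ℝ) :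
    (d.choose k : ℝ) ^ 2 * θ ^ (2 * (d - k)) * k.factorial ≤
      d ^ 2 * max (d : ℝ) |θ| ^ (2 * (d - 1)) / k.factorial := by
  set M := max (d : ℝ) |θ|
  have hchoose : ((d.choose k : ℝ) * k.factorial) ^ 2 ≤ ((d : ℝ) ^ 2) ^ k := by
    exact_mod_cast Nat.choose_mul_factorial_sq_le d k
  have hθ : θ ^ 2 ≤ M ^ 2 := by
    rw [← sq_abs]
    gcongr
    exact le_max_right _ _
  have hd : (d : ℝ) ^ 2 ≤ M ^ 2 := by
    gcongr
    exact le_max_left _ _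
  have hM : (M ^ 2) ^ (k - 1) * (M ^ 2) ^ (d - k) = M ^ (2 * (d - 1)) := by
    rw [← pow_add, ← pow_mul]
    congr 1
    omega
  rw [le_div_iff₀ (by positivity), pow_mul, ← hM]
  calc (d.choose k : ℝ) ^ 2 * (θ ^ 2) ^ (d - k) * k.factorial * k.factorial
      = ((d.choose k : ℝ) * k.factorial) ^ 2 * (θ ^ 2) ^ (d - k) := by ring
    _ ≤ ((d : ℝ) ^ 2) ^ k * (M ^ 2) ^ (d - k) := by gcongr
    _ = d ^ 2 * (((d : ℝ) ^ 2) ^ (k - 1) * (M ^ 2) ^ (d - k)) := by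
      rw [← mul_assoc, ← pow_succ', Nat.sub_add_cancel hk]
    _ ≤ d ^ 2 * ((M ^ 2) ^ (k - 1) * (M ^ 2) ^ (d - k)) := by gcongr

lemma sum_Icc_inv_factorial_le_exp_one (d : ℕ) :
    ∑ k ∈ Icc 1 d, (k.factorial : ℝ)⁻¹ ≤ exp 1 := by
  calc ∑ k ∈ Icc 1 d, (k.factorial : ℝ)⁻¹ ≤ ∑ k ∈ range (d + 1), (1 : ℝ) ^ k / k.factorial := by
        simp only [one_pow, one_div]
        exact sum_le_sum_of_subset_of_nonneg (fun k hk ↦ by simp only [mem_Icc, mem_range] at hk ⊢; omega)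
          (fun _ _ _ ↦ by positivity)
    _ ≤ exp 1 := sum_le_exp_of_nonneg zero_le_one _

lemma sum_choose_sq_mul_pow_mul_factorial_le (d : ℕ) (θ : ℝ) :
    ∑ k ∈ Icc 1 d, (d.choose k : ℝ) ^ 2 * θ ^ (2 * (d - k)) * k.factorial ≤
      3 * d ^ 2 * max (d : ℝ) |θ| ^ (2 * (d - 1)) := by
  calc ∑ k ∈ Icc 1 d, (d.choose k : ℝ) ^ 2 * θ ^ (2 * (d - k)) * k.factorial
      ≤ ∑ k ∈ Icc 1 d, d ^ 2 * max (d : ℝ) |θ| ^ (2 * (d - 1)) * (k.factorial : ℝ)⁻¹ := by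
        refine sum_le_sum fun k hk ↦ ?_
        rw [mem_Icc] at hk
        exact (choose_sq_mul_pow_mul_factorial_le hk.1 hk.2 θ).trans_eq (div_eq_mul_inv _ _)
    _ ≤ d ^ 2 * max (d : ℝ) |θ| ^ (2 * (d - 1)) * exp 1 := by
        rw [← mul_sum]
        gcongr
        exact sum_Icc_inv_factorial_le_exp_one d
    _ ≤ d ^ 2 * max (d : ℝ) |θ| ^ (2 * (d - 1)) * 3 := by gcongr; exact exp_one_lt_three.le
    _ = 3 * d ^ 2 * max (d : ℝ) |θ| ^ (2 * (d - 1)) := by ring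

end

theorem stmt_7_general (d : ℕ) (θ : ℝ) :
    ProbabilityTheory.variance (fun x => (Polynomial.aeval x (Polynomial.hermite d) : ℝ))
        (ProbabilityTheory.gaussianReal θ 1) =
      (∑ k ∈ Finset.Icc 1 d, (d.choose k : ℝ) ^ 2 * θ ^ (2 * (d - k)) * (k.factorial : ℝ)) ∧
    (∑ k ∈ Finset.Icc 1 d, (d.choose k : ℝ) ^ 2 * θ ^ (2 * (d - k)) * (k.factorial : ℝ)) ≤
      3 * (d : ℝ) ^ 2 * (max (d : ℝ) |θ|) ^ (2 * (d - 1)) :=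
  ⟨ProbabilityTheory.variance_aeval_hermite_gaussianReal θ d,
    sum_choose_sq_mul_pow_mul_factorial_le d θ⟩

/-- Variance bound for a Hermite polynomial of a shifted Gaussian: for `X ~ N(θ,1)` and `d ≥ 1`,
`Var[He_d(X)] = ∑_{k=1}^{d} C(d,k)² θ^{2(d-k)} k! ≤ 3 d² max(d,|θ|)^{2(d-1)}`. -/
theorem stmt_7 (d : ℕ) (hd : 1 ≤ d) (θ : ℝ) :
    ProbabilityTheory.variance (fun x => (Polynomial.aeval x (Polynomial.hermite d) : ℝ))
        (ProbabilityTheory.gaussianReal θ 1) =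
      (∑ k ∈ Finset.Icc 1 d, (d.choose k : ℝ) ^ 2 * θ ^ (2 * (d - k)) * (k.factorial : ℝ)) ∧
    (∑ k ∈ Finset.Icc 1 d, (d.choose k : ℝ) ^ 2 * θ ^ (2 * (d - k)) * (k.factorial : ℝ)) ≤
      3 * (d : ℝ) ^ 2 * (max (d : ℝ) |θ|) ^ (2 * (d - 1)) :=
  stmt_7_general d θ
end
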